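/- arXiv:1504.06138 — 3 statements merged into one kernel-verified Lean document; each statement's English description precedes it below -/
import Mathlib

section
/- For all integers 0 ≤ m ≤ n and every real number x > −1, the m-th derivative of g_n at x equals g_{n−m}(x); that is, d^m/dx^m g_n(x) = g_{n−m}(x) on the interval (−1, ∞). -/
open Real

/-- `g 0 x = 1/(1+x)` and, for `n ≥ 1`,
`g n x = ((1+x)^{n−1}/((n−1)!)²) · ((n−1)!·log(1+x) − H_{n−1}·(n−1)!)`. -/
noncomputable def g : ℕ → ℝ → ℝ
  | 0, x => 1 / (1 + x)
  | (n + 1), x =>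
      ((1 + x) ^ n / ((n.factorial : ℝ)) ^ 2) *
        ((n.factorial : ℝ) * Real.log (1 + x) - (harmonic n : ℝ) * (n.factorial : ℝ))

lemma hasDerivAt_g (n : ℕ) (x : ℝ) (hx : -1 < x) :
    HasDerivAt (g (n + 1)) (g n x) x := by
  have h1 : (0 : ℝ) < 1 + x := by linarith
  have h0 : HasDerivAt (fun y : ℝ => 1 + y) 1 x := (hasDerivAt_id x).const_add 1
  have hl : HasDerivAt (fun y : ℝ => Real.log (1 + y)) (1 / (1 + x)) x := by
    simpa using h0.log h1.ne'
  have hp : HasDerivAt (fun y : ℝ => (1 + y) ^ n) ((n : ℝ) * (1 + x) ^ (n - 1) * 1) x :=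
    h0.pow n
  have hfac : ((n.factorial : ℝ)) ≠ 0 := Nat.cast_ne_zero.mpr n.factorial_ne_zero
  have H := ((hp.div_const ((n.factorial : ℝ) ^ 2)).mul
    ((hl.const_mul (n.factorial : ℝ)).sub_const ((harmonic n : ℝ) * (n.factorial : ℝ))))
  have heq : (g (n + 1)) = fun y : ℝ =>
      ((1 + y) ^ n / ((n.factorial : ℝ)) ^ 2) *
        ((n.factorial : ℝ) * Real.log (1 + y) - (harmonic n : ℝ) * (n.factorial : ℝ)) := rfl
  rw [heq]
  refine H.congr_deriv (Eq.symm ?_)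
  cases n with
  | zero => simp [g]
  | succ m =>
    have hm : (m + 1 : ℕ) - 1 = m := rfl
    rw [hm]
    show ((1 + x) ^ m / ((m.factorial : ℝ)) ^ 2) *
        ((m.factorial : ℝ) * Real.log (1 + x) - (harmonic m : ℝ) * (m.factorial : ℝ)) = _
    have hfacm : ((m.factorial : ℝ)) ≠ 0 := Nat.cast_ne_zero.mpr m.factorial_ne_zero
    have hfs : ((m + 1).factorial : ℝ) = ((m : ℝ) + 1) * (m.factorial : ℝ) := by
      rw [Nat.factorial_succ]; push_cast; ring
    have hhs : ((harmonic (m + 1) : ℝ)) = (harmonic m : ℝ) + ((m : ℝ) + 1)⁻¹ := by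
      rw [harmonic_succ]; push_cast; ring
    rw [hfs, hhs]
    have hm1 : ((m : ℝ) + 1) ≠ 0 := by positivity
    field_simp
    push_cast
    ring

lemma iteratedDerivWithin_g_aux (m : ℕ) :
    ∀ k : ℕ, ∀ x ∈ Set.Ioi (-1 : ℝ),
      iteratedDerivWithin m (g (k + m)) (Set.Ioi (-1 : ℝ)) x = g k x := by
  have hu : UniqueDiffOn ℝ (Set.Ioi (-1 : ℝ)) := (isOpen_Ioi).uniqueDiffOn
  induction m with
  | zero => intro k x hx; simp
  | succ m IH =>
    intro k x hx
    rw [iteratedDerivWithin_succ']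
    have heq : Set.EqOn (derivWithin (g (k + (m + 1))) (Set.Ioi (-1 : ℝ)))
        (g (k + m)) (Set.Ioi (-1 : ℝ)) := by
      intro y hy
      have : k + (m + 1) = (k + m) + 1 := by ring
      rw [this]
      exact ((hasDerivAt_g (k + m) y hy).hasDerivWithinAt).derivWithin
        (hu.uniqueDiffWithinAt hy)
    rw [iteratedDerivWithin_congr heq hx]
    exact IH k x hx

/-- For all integers `0 ≤ m ≤ n` and every real `x > −1`, the m-th derivative of
`g n` (taken on the interval `(−1, ∞)`) at `x` equals `g (n−m) x`. -/
theorem iteratedDeriv_g (m n : ℕ) (hmn : m ≤ n) (x : ℝ) (hx : x ∈ Set.Ioi (-1 : ℝ)) :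
    iteratedDerivWithin m (g n) (Set.Ioi (-1 : ℝ)) x = g (n - m) x := by
  have h := iteratedDerivWithin_g_aux m (n - m) x hx
  rwa [Nat.sub_add_cancel hmn] at h
end

section
/- For every integer n ≥ 1 and every real number x with |x| < 1, the power series expansion of g_n about 0 is g_n(x) = −∑_{i=0}^{n−1} (H_{n−1−i}/(i!·(n−1−i)!))·x^i + ∑_{i=n}^{∞} ((−1)^{i−n}·(i−n)!/i!)·x^i, where the infinite series on the right converges (in the sense of HasSum) to the indicated value. -/
open Real

lemma g_hasDerivAt (n : ℕ) (t : ℝ) (ht : -1 < t) : HasDerivAt (g (n + 1)) (g n t) t := by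
  have h1t : (1 : ℝ) + t ≠ 0 := by linarith
  have hlog : HasDerivAt (fun s : ℝ => Real.log (1 + s)) (1 / (1 + t)) t := by
    simpa using (HasDerivAt.log ((hasDerivAt_id t).const_add 1) h1t)
  match n with
  | 0 =>
    have hg1 : g 1 = fun s : ℝ => ((1+s)^0 / ((Nat.factorial 0 : ℝ))^2) *
        ((Nat.factorial 0 : ℝ) * Real.log (1+s) - (harmonic 0 : ℝ) * (Nat.factorial 0 : ℝ)) := by
      funext s; simp [g]
    have hg0 : g 0 t = 1 / (1 + t) := by simp [g]
    rw [hg1, hg0]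
    simpa using hlog
  | (m + 1) =>
    have hpow : HasDerivAt (fun s : ℝ => (1 + s) ^ (m + 1))
        ((m + 1 : ℝ) * (1 + t) ^ m) t := by
      simpa using (((hasDerivAt_id t).const_add 1).fun_pow (m+1))
    set C : ℝ := ((m+1).factorial : ℝ)
    have hC : C ≠ 0 := by positivity
    have hm : (m.factorial : ℝ) ≠ 0 := by positivity
    have hA : HasDerivAt (fun s : ℝ => (1 + s) ^ (m+1) / C ^ 2)
        (((m + 1 : ℝ) * (1 + t) ^ m) / C ^ 2) t := hpow.div_const _
    have hB : HasDerivAt (fun s : ℝ => C * Real.log (1 + s) - (harmonic (m+1) : ℝ) * C)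
        (C * (1 / (1 + t))) t := (hlog.const_mul C).sub_const _
    have hder := hA.fun_mul hB
    have hg2 : g (m+2) = fun s : ℝ => ((1+s)^(m+1) / C^2) *
        (C * Real.log (1+s) - (harmonic (m+1) : ℝ) * C) := by
      funext s; simp [g, C]
    rw [hg2]
    refine hder.congr_deriv ?_
    symm
    show ((1+t)^m / ((m.factorial:ℝ))^2) * ((m.factorial:ℝ) * Real.log (1+t) - (harmonic m : ℝ) * (m.factorial:ℝ)) = _
    have hCe : C = ((m+1 : ℕ) : ℝ) * (m.factorial : ℝ) := by
      simp [C, Nat.factorial_succ]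
    have hh : ((harmonic (m+1) : ℝ)) = (harmonic m : ℝ) + (((m:ℝ)+1))⁻¹ := by
      rw [harmonic_succ]; push_cast; ring
    rw [hh, hCe, pow_succ]
    push_cast
    field_simp
    ring

lemma g_continuousAt (n : ℕ) (t : ℝ) (ht : -1 < t) : ContinuousAt (g n) t := by
  match n with
  | 0 =>
    have hg0 : g 0 = fun s : ℝ => 1 / (1 + s) := by funext s; simp [g]
    rw [hg0]
    exact ContinuousAt.div continuousAt_const (by fun_prop) (by intro h; linarith)
  | (m + 1) => exact (g_hasDerivAt m t ht).continuousAt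

lemma aux_expansion : ∀ n : ℕ, ∀ x : ℝ, |x| < 1 →
    HasSum
      (fun i : ℕ =>
        if n ≤ i then ((-1 : ℝ) ^ (i - n) * ((i - n).factorial : ℝ) / (i.factorial : ℝ)) * x ^ i
        else 0)
      (g n x +
        ∑ i ∈ Finset.range n,
          ((harmonic (n - 1 - i) : ℝ) / ((i.factorial : ℝ) * ((n - 1 - i).factorial : ℝ))) * x ^ i) := by
  intro n
  induction n with
  | zero =>
    intro x hx
    have h1 : (fun i : ℕ =>
        if 0 ≤ i then ((-1 : ℝ) ^ (i - 0) * ((i - 0).factorial : ℝ) / (i.factorial : ℝ)) * x ^ i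
        else 0) = fun i : ℕ => (-x) ^ i := by
      funext i
      have hne : ((i).factorial : ℝ) ≠ 0 := by positivity
      rw [if_pos (Nat.zero_le i), Nat.sub_zero, mul_div_assoc, div_self hne, mul_one,
        show (-x) = (-1:ℝ) * x by ring, mul_pow]
    rw [h1]
    have h2 := hasSum_geometric_of_abs_lt_one (r := -x) (by rwa [abs_neg])
    have hg0 : g 0 x = 1 / (1 + x) := by simp [g]
    simpa [hg0, sub_neg_eq_add, one_div, add_comm] using h2
  | succ n IH =>
    intro x hx
    set b : ℕ → ℝ := fun i =>
      (harmonic (n - 1 - i) : ℝ) / ((i.factorial : ℝ) * ((n - 1 - i).factorial : ℝ)) with hb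
    set F : ℕ → ℝ → ℝ := fun i t =>
      if n ≤ i then ((-1 : ℝ) ^ (i - n) * ((i - n).factorial : ℝ) / (i.factorial : ℝ)) * t ^ i
      else 0 with hF
    have habsIcc : ∀ t ∈ Set.uIcc (0:ℝ) x, |t| ≤ |x| := by
      intro t ht
      have h1 := le_abs_self x
      have h2 := neg_abs_le x
      rcases Set.mem_uIcc.mp ht with ⟨ha, hb⟩ | ⟨ha, hb⟩ <;> rw [abs_le] <;>
        constructor <;> linarith
    have habsIoc : ∀ t ∈ Set.uIoc (0:ℝ) x, |t| ≤ |x| := fun t ht =>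
      habsIcc t (Set.uIoc_subset_uIcc ht)
    -- term-by-term integration
    have key : HasSum (fun i => ∫ t in (0:ℝ)..x, F i t)
        (∫ t in (0:ℝ)..x, (g n t + ∑ i ∈ Finset.range n, b i * t ^ i)) := by
      apply intervalIntegral.hasSum_integral_of_dominated_convergence
        (bound := fun i (_ : ℝ) => |x| ^ i)
      · intro i
        apply Continuous.aestronglyMeasurable
        by_cases h : n ≤ i <;> simp only [hF, h, if_true, if_false] <;> fun_prop
      · intro i
        filter_upwards with t ht
        by_cases h : n ≤ i
        · simp only [hF, h, if_true]
          rw [Real.norm_eq_abs, abs_mul, abs_pow]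
          have hc : |(-1 : ℝ) ^ (i - n) * ((i - n).factorial : ℝ) / (i.factorial : ℝ)| ≤ 1 := by
            rw [abs_div, abs_mul, abs_pow, abs_neg, abs_one, one_pow, one_mul,
              abs_of_nonneg (by positivity : (0:ℝ) ≤ ((i-n).factorial : ℝ)),
              abs_of_nonneg (by positivity : (0:ℝ) ≤ ((i).factorial : ℝ))]
            rw [div_le_one (by positivity)]
            exact_mod_cast Nat.factorial_le (Nat.sub_le i n)
          calc _ ≤ 1 * |t| ^ i := by
                  apply mul_le_mul_of_nonneg_right hc (by positivity)
            _ ≤ |x| ^ i := by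
                  rw [one_mul]
                  exact pow_le_pow_left₀ (abs_nonneg t) (habsIoc t ht) i
        · simp only [hF, h, if_false, norm_zero]
          positivity
      · filter_upwards with t ht
        exact summable_geometric_of_lt_one (abs_nonneg x) hx
      · exact intervalIntegrable_const
      · filter_upwards with t ht
        have h1 : |t| < 1 := lt_of_le_of_lt (habsIoc t ht) hx
        exact IH t h1
    -- compute the integrals
    have hm1 : ∀ t ∈ Set.uIcc (0:ℝ) x, -1 < t := by
      intro t ht
      have := habsIcc t ht
      have := neg_abs_le t
      have h1 : |t| < 1 := lt_of_le_of_lt (habsIcc t ht) hx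
      have := neg_abs_le t
      nlinarith [abs_nonneg t, neg_abs_le t]
    have hgint : IntervalIntegrable (g n) MeasureTheory.volume 0 x :=
      (ContinuousOn.intervalIntegrable (fun t ht => (g_continuousAt n t (hm1 t ht)).continuousWithinAt))
    have hPcont : Continuous (fun t : ℝ => ∑ i ∈ Finset.range n, b i * t ^ i) := by fun_prop
    have hPint : IntervalIntegrable (fun t : ℝ => ∑ i ∈ Finset.range n, b i * t ^ i)
        MeasureTheory.volume 0 x := hPcont.intervalIntegrable _ _
    have hFTC : (∫ t in (0:ℝ)..x, g n t) = g (n+1) x - g (n+1) 0 :=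
      intervalIntegral.integral_eq_sub_of_hasDerivAt
        (fun t ht => g_hasDerivAt n t (hm1 t ht)) hgint
    have hsplit : (∫ t in (0:ℝ)..x, (g n t + ∑ i ∈ Finset.range n, b i * t ^ i))
        = (g (n+1) x - g (n+1) 0) + ∑ i ∈ Finset.range n, b i * (x ^ (i+1) / (i+1)) := by
      rw [intervalIntegral.integral_add hgint hPint, hFTC]
      congr 1
      rw [intervalIntegral.integral_finset_sum
        (fun i _ => ((by fun_prop : Continuous fun t : ℝ => b i * t ^ i).intervalIntegrable _ _))]
      apply Finset.sum_congr rfl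
      intro i _
      rw [intervalIntegral.integral_const_mul, integral_pow]
      norm_num
    have h0 : g (n+1) 0 = -((harmonic n : ℝ) / (n.factorial : ℝ)) := by
      have : g (n+1) 0 = ((1+(0:ℝ))^n / ((n.factorial : ℝ))^2) *
          ((n.factorial : ℝ) * Real.log (1+0) - (harmonic n : ℝ) * (n.factorial : ℝ)) := by
        simp [g]
      rw [this]
      have hnf : (n.factorial : ℝ) ≠ 0 := by positivity
      simp [Real.log_one]
      field_simp
    -- reindex
    set J : ℕ → ℝ := fun j =>
      if n + 1 ≤ j then ((-1 : ℝ) ^ (j - (n+1)) * ((j - (n+1)).factorial : ℝ) / (j.factorial : ℝ)) * x ^ j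
      else 0 with hJ
    have hcomp : ∀ i, J (i + 1) = ∫ t in (0:ℝ)..x, F i t := by
      intro i
      by_cases h : n ≤ i
      · have hif : (∫ t in (0:ℝ)..x, F i t)
            = ((-1 : ℝ) ^ (i - n) * ((i - n).factorial : ℝ) / (i.factorial : ℝ)) * (x ^ (i+1) / (i+1)) := by
          simp only [hF, h, if_true]
          rw [intervalIntegral.integral_const_mul, integral_pow]
          norm_num
        rw [hif]
        simp only [hJ, Nat.add_le_add_iff_right, h, if_true, Nat.succ_sub_succ]
        have hfs : ((i+1).factorial : ℝ) = (i+1) * (i.factorial : ℝ) := by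
          rw [Nat.factorial_succ]; push_cast; ring
        have h1 : (i.factorial : ℝ) ≠ 0 := by positivity
        have h2 : ((i:ℝ) + 1) ≠ 0 := by positivity
        rw [hfs]
        field_simp
        try ring_nf
        try exact Or.inl trivial
        try ring
      · have hif : (∫ t in (0:ℝ)..x, F i t) = 0 := by
          simp only [hF, h, if_false]
          simp
        rw [hif]
        simp only [hJ, Nat.add_le_add_iff_right, h, if_false]
    have hval : g (n+1) x +
        ∑ i ∈ Finset.range (n+1),
          ((harmonic (n + 1 - 1 - i) : ℝ) / ((i.factorial : ℝ) * ((n + 1 - 1 - i).factorial : ℝ))) * x ^ i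
        = (g (n+1) x - g (n+1) 0) + ∑ i ∈ Finset.range n, b i * (x ^ (i+1) / (i+1)) := by
      rw [Finset.sum_range_succ']
      have hterm0 : ((harmonic (n + 1 - 1 - 0) : ℝ) /
          ((Nat.factorial 0 : ℝ) * ((n + 1 - 1 - 0).factorial : ℝ))) * x ^ 0
          = (harmonic n : ℝ) / (n.factorial : ℝ) := by
        simp
      have hterms : ∀ i ∈ Finset.range n,
          ((harmonic (n + 1 - 1 - (i+1)) : ℝ) /
            (((i+1).factorial : ℝ) * ((n + 1 - 1 - (i+1)).factorial : ℝ))) * x ^ (i+1)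
          = b i * (x ^ (i+1) / (i+1)) := by
        intro i _
        have he : n + 1 - 1 - (i+1) = n - 1 - i := by omega
        rw [he, hb]
        have hfs : ((i+1).factorial : ℝ) = ((i:ℝ)+1) * (i.factorial : ℝ) := by
          rw [Nat.factorial_succ]; push_cast; ring
        rw [hfs]
        have h1 : (i.factorial : ℝ) ≠ 0 := by positivity
        have h3 : (((n-1-i).factorial : ℝ)) ≠ 0 := by positivity
        field_simp
        try ring_nf
        try exact Or.inl trivial
        try ring
      rw [Finset.sum_congr rfl hterms, hterm0, h0]
      ring
    have key' : HasSum (fun i => J (i + 1))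
        (g (n+1) x + ∑ i ∈ Finset.range (n+1),
          ((harmonic (n + 1 - 1 - i) : ℝ) / ((i.factorial : ℝ) * ((n + 1 - 1 - i).factorial : ℝ))) * x ^ i) := by
      have hfun : (fun i => J (i + 1)) = fun i => ∫ t in (0:ℝ)..x, F i t := funext hcomp
      rw [hval, hfun, ← hsplit]
      exact key
    have hzero : ∀ j ∉ Set.range Nat.succ, J j = 0 := by
      intro j hj
      have : j = 0 := by
        by_contra h
        exact hj ⟨j - 1, by omega⟩
      rw [this]
      simp [hJ]
    exact (Function.Injective.hasSum_iff Nat.succ_injective hzero).mp key'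


/-- For `n ≥ 1` and `|x| < 1`, the power series expansion of `g n` about `0`:
`g_n(x) = −∑_{i=0}^{n−1} (H_{n−1−i}/(i!·(n−1−i)!))·x^i
          + ∑_{i=n}^{∞} ((−1)^{i−n}·(i−n)!/i!)·x^i`,
expressed by saying that the tail series `HasSum` to
`g n x + ∑_{i=0}^{n−1} (H_{n−1−i}/(i!·(n−1−i)!))·x^i`. -/
theorem g_powerSeries_expansion (n : ℕ) (hn : 1 ≤ n) (x : ℝ) (hx : |x| < 1) :
    HasSum
      (fun i : ℕ =>
        if n ≤ i then ((-1 : ℝ) ^ (i - n) * ((i - n).factorial : ℝ) / (i.factorial : ℝ)) * x ^ i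
        else 0)
      (g n x +
        ∑ i ∈ Finset.range n,
          ((harmonic (n - 1 - i) : ℝ) / ((i.factorial : ℝ) * ((n - 1 - i).factorial : ℝ))) * x ^ i) :=
  aux_expansion n x hx
end

section
/- Let R be a commutative ring, f ∈ R[[X]] a formal power series with coefficients c_i, and n ≥ 1 an integer. Define the truncation T_n f to be the power series whose i-th coefficient equals c_i for i ≥ n and 0 for i < n, and set μ := ∑_{j=0}^{n−1} (−1)^{n−1−j} c_j. Then, in R[[X]] (where 1+X is a unit), T_n( (X/(1+X))·f ) = (X/(1+X))·(T_n f) + μ·X^n/(1+X). -/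
open PowerSeries

/-- The truncation operator `T n`: keeps the coefficients of `X^i` for `i ≥ n` and
kills those for `i < n` (the overbrace operator of the paper). -/
noncomputable def tailTrunc (R : Type*) [CommRing R] (n : ℕ) (f : PowerSeries R) :
    PowerSeries R :=
  PowerSeries.mk fun i => if n ≤ i then PowerSeries.coeff (R := R) i f else 0

/-! Multiplication by `1 + X` commutes with `T_n` up to a monomial in degree `n`. Since
`u = X·f/(1+X)` satisfies `(1+X)·u = X·f`, this gives `(1+X)·T_n u = X·T_n f + c·X^n`, where `c`
is the coefficient of `X^n` in `X·(f - u) = u`. Dividing by `1 + X` yields the identity, and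
`c = μ` is read off from `1/(1+X) = ∑ (-1)^i X^i`. -/

section tailTrunc

variable {R : Type*} [CommRing R] (n : ℕ)

theorem coeff_tailTrunc (i : ℕ) (f : PowerSeries R) :
    coeff i (tailTrunc R n f) = if n ≤ i then coeff i f else 0 :=
  coeff_mk _ _

theorem tailTrunc_add (f h : PowerSeries R) :
    tailTrunc R n (f + h) = tailTrunc R n f + tailTrunc R n h := by
  ext i
  simp only [coeff_tailTrunc, map_add]
  split_ifs <;> simp

theorem tailTrunc_X_mul (h : PowerSeries R) :
    tailTrunc R n (X * h) = X * tailTrunc R n h + C (coeff n (X * h)) * X ^ n := by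
  ext i
  rw [map_add, coeff_tailTrunc, coeff_C_mul_X_pow]
  cases i with
  | zero => rcases n with _ | n <;> simp
  | succ m =>
    rw [coeff_succ_X_mul, coeff_succ_X_mul, coeff_tailTrunc]
    obtain rfl | hne := eq_or_ne n (m + 1)
    · simp [coeff_succ_X_mul]
    · have hle : n ≤ m + 1 ↔ n ≤ m := by omega
      simp [hne.symm, hle]

theorem tailTrunc_one_add_X_mul (h : PowerSeries R) :
    tailTrunc R n ((1 + X) * h) = (1 + X) * tailTrunc R n h + C (coeff n (X * h)) * X ^ n := by
  rw [add_mul, one_mul, tailTrunc_add, tailTrunc_X_mul]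
  ring

end tailTrunc

section invOneAddX

variable {R : Type*} [CommRing R] {g : PowerSeries R}

theorem coeff_inv_one_add_X (hg : (1 + X) * g = 1) (i : ℕ) : coeff i g = (-1 : R) ^ i := by
  have hg' : g = 1 - X * g := by linear_combination hg
  induction i with
  | zero => rw [hg']; simp
  | succ k ih => rw [hg', map_sub, coeff_succ_X_mul, ih]; simp [pow_succ]

theorem coeff_X_mul_inv_one_add_X_mul (hg : (1 + X) * g = 1) (f : PowerSeries R) (n : ℕ) :
    coeff n (X * g * f) = ∑ j ∈ Finset.range n, (-1 : R) ^ (n - 1 - j) * coeff j f := by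
  cases n with
  | zero => simp
  | succ m =>
    rw [mul_assoc, coeff_succ_X_mul, mul_comm, coeff_mul,
      Finset.Nat.sum_antidiagonal_eq_sum_range_succ_mk]
    refine Finset.sum_congr rfl fun j _ => ?_
    rw [coeff_inv_one_add_X hg, Nat.add_sub_cancel, mul_comm]

end invOneAddX

theorem tailTrunc_mul_X_div_one_add_X_general {R : Type*} [CommRing R]
    (f g : PowerSeries R) (hg : (1 + PowerSeries.X) * g = 1) (n : ℕ)
    (μ : R) (hμ : μ = ∑ j ∈ Finset.range n, (-1 : R) ^ (n - 1 - j) * PowerSeries.coeff (R := R) j f) :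
    tailTrunc R n (PowerSeries.X * g * f)
      = PowerSeries.X * g * tailTrunc R n f
        + PowerSeries.C (R := R) μ * (PowerSeries.X ^ n * g) := by
  set u := X * g * f
  have hu : (1 + X) * u = X * f := by linear_combination X * f * hg
  have hμu : μ = coeff n (X * f) - coeff n (X * u) := by
    have hfu : X * (f - u) = X * g * f := by linear_combination -X * f * hg
    rw [hμ, ← map_sub, ← mul_sub, hfu, coeff_X_mul_inv_one_add_X_mul hg]
  have key : (1 + X) * tailTrunc R n u = X * tailTrunc R n f + C μ * X ^ n := by
    have h := tailTrunc_one_add_X_mul n u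
    rw [hu, tailTrunc_X_mul] at h
    rw [hμu, map_sub]
    linear_combination -h
  calc tailTrunc R n u = g * ((1 + X) * tailTrunc R n u) := by
        linear_combination -(tailTrunc R n u) * hg
    _ = _ := by rw [key]; ring

/-- Let `R` be a commutative ring, `f ∈ R[[X]]` with coefficients `c_i`, and `n ≥ 1`.
With `g` the inverse of `1 + X` (so `X·g` plays the role of `X/(1+X)`) and
`μ = ∑_{j=0}^{n−1} (−1)^{n−1−j} c_j`, one has
`T_n((X/(1+X))·f) = (X/(1+X))·(T_n f) + μ·X^n/(1+X)` in `R[[X]]`. -/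
theorem tailTrunc_mul_X_div_one_add_X {R : Type*} [CommRing R]
    (f g : PowerSeries R) (hg : (1 + PowerSeries.X) * g = 1) (n : ℕ) (hn : 1 ≤ n)
    (μ : R) (hμ : μ = ∑ j ∈ Finset.range n, (-1 : R) ^ (n - 1 - j) * PowerSeries.coeff (R := R) j f) :
    tailTrunc R n (PowerSeries.X * g * f)
      = PowerSeries.X * g * tailTrunc R n f
        + PowerSeries.C (R := R) μ * (PowerSeries.X ^ n * g) :=
  tailTrunc_mul_X_div_one_add_X_general f g hg n μ hμ
end
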